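/- arXiv:2009.12899 — 5 statements merged into one kernel-verified Lean document; each statement's English description precedes it below -/
import Mathlib

section
/- Let a, b, c be positive integers with a > c, and let 2 < β < γ. For all sufficiently large integers x, if z is an integer with ((b/(c x² log x)) + a/c)^(1/γ) · x < z < (a/c)^(1/β) · x, then there exists a real number α with β ≤ α ≤ γ such that a·x^α + b = c·z^α. -/
/-!
For fixed `x` and `z`, the function `α ↦ c z^α - (a x^α + b)` is continuous, so it suffices to
see that it changes sign on `[β, γ]`. The upper bound on `z` gives `c z^β < a x^β` directly.
The lower bound gives `c z^γ > (b / (x² log x) + a) x^γ`, and since `γ > 2` we eventually have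
`x² log x ≤ x^γ`, so this is at least `a x^γ + b`.
-/

open Filter Real

namespace Real

lemma mul_rpow_one_div_eq {r x p : ℝ} (hr : 0 ≤ r) (hx : 0 ≤ x) (hp : p ≠ 0) :
    r ^ (1 / p) * x = (r * x ^ p) ^ p⁻¹ := by
  rw [mul_rpow hr (rpow_nonneg hx p), rpow_rpow_inv hx hp, one_div]

lemma rpow_one_div_mul_lt_iff {r x z p : ℝ} (hr : 0 ≤ r) (hx : 0 ≤ x) (hz : 0 ≤ z)
    (hp : 0 < p) : r ^ (1 / p) * x < z ↔ r * x ^ p < z ^ p := by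
  rw [mul_rpow_one_div_eq hr hx hp.ne', rpow_inv_lt_iff_of_pos (by positivity) hz hp]

lemma lt_rpow_one_div_mul_iff {r x z p : ℝ} (hr : 0 ≤ r) (hx : 0 ≤ x) (hz : 0 ≤ z)
    (hp : 0 < p) : z < r ^ (1 / p) * x ↔ z ^ p < r * x ^ p := by
  rw [mul_rpow_one_div_eq hr hx hp.ne', lt_rpow_inv_iff_of_pos hz (by positivity) hp]

lemma eventually_sq_mul_log_le_rpow {γ : ℝ} (hγ : 2 < γ) :
    ∀ᶠ t : ℝ in atTop, t ^ 2 * log t ≤ t ^ γ := by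
  filter_upwards [(isLittleO_log_rpow_atTop (sub_pos.mpr hγ)).bound one_pos,
    eventually_ge_atTop 1] with t hlog ht
  have ht₀ : 0 < t := by linarith
  rw [norm_of_nonneg (log_nonneg ht), one_mul, norm_of_nonneg (rpow_nonneg ht₀.le _)] at hlog
  calc t ^ 2 * log t ≤ t ^ 2 * t ^ (γ - 2) := by gcongr
    _ = t ^ γ := by rw [← rpow_natCast, ← rpow_add ht₀]; norm_num

end Real

lemma exists_rpow_eq_of_sign_change {a b c x z β γ : ℝ} (hx : 0 < x) (hz : 0 < z) (hβγ : β ≤ γ)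
    (hβ : c * z ^ β ≤ a * x ^ β + b) (hγ : a * x ^ γ + b ≤ c * z ^ γ) :
    ∃ α, β ≤ α ∧ α ≤ γ ∧ a * x ^ α + b = c * z ^ α := by
  have hcont : ContinuousOn (fun α => c * z ^ α - (a * x ^ α + b)) (Set.Icc β γ) := by
    fun_prop (disch := positivity)
  obtain ⟨α, ⟨hβα, hαγ⟩, hα⟩ :=
    intermediate_value_Icc hβγ hcont ⟨sub_nonpos.mpr hβ, sub_nonneg.mpr hγ⟩
  exact ⟨α, hβα, hαγ, (sub_eq_zero.mp hα).symm⟩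

theorem stmt0_general (a b c : ℕ) (hc : 0 < c)
    (β γ : ℝ) (hβ : 2 < β) (hβγ : β < γ) :
    ∃ x₀ : ℕ, ∀ x : ℕ, x₀ ≤ x → ∀ z : ℤ,
      ((b : ℝ) / (c * (x : ℝ) ^ 2 * Real.log x) + (a : ℝ) / c) ^ (1 / γ) * x < (z : ℝ) →
      (z : ℝ) < ((a : ℝ) / c) ^ (1 / β) * x →
      ∃ α : ℝ, β ≤ α ∧ α ≤ γ ∧
        (a : ℝ) * (x : ℝ) ^ α + (b : ℝ) = (c : ℝ) * (z : ℝ) ^ α := by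
  obtain ⟨x₀, hx₀⟩ := eventually_atTop.mp <| tendsto_natCast_atTop_atTop.eventually <|
    (eventually_sq_mul_log_le_rpow (hβ.trans hβγ)).and (eventually_gt_atTop 1)
  refine ⟨x₀, fun x hx z hzγ hzβ => ?_⟩
  obtain ⟨hpow, hx₁⟩ := hx₀ x hx
  have hc₀ : (0 : ℝ) < c := by exact_mod_cast hc
  have hden : 0 < (x : ℝ) ^ 2 * log x := by have := log_pos hx₁; positivity
  have hz : 0 < (z : ℝ) := lt_of_le_of_lt (by positivity) hzγ
  have hlow : c * (z : ℝ) ^ β ≤ a * x ^ β + b := by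
    rw [lt_rpow_one_div_mul_iff (by positivity) (by positivity) hz.le (by linarith),
      div_mul_eq_mul_div, lt_div_iff₀ hc₀] at hzβ
    linarith [Nat.cast_nonneg (α := ℝ) b]
  have hhigh : a * (x : ℝ) ^ γ + b ≤ c * z ^ γ := by
    rw [rpow_one_div_mul_lt_iff (by positivity) (by positivity) hz.le (by linarith)] at hzγ
    have hb : (b : ℝ) ≤ b / (x ^ 2 * log x) * x ^ γ := by
      rw [div_mul_eq_mul_div, le_div_iff₀ hden]; gcongr
    have hcancel : (c : ℝ) * (b / (c * x ^ 2 * log x) + a / c) = b / (x ^ 2 * log x) + a := by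
      field_simp
    calc a * (x : ℝ) ^ γ + b ≤ (b / (x ^ 2 * log x) + a) * x ^ γ := by linarith
      _ = c * ((b / (c * x ^ 2 * log x) + a / c) * x ^ γ) := by rw [← hcancel, mul_assoc]
      _ ≤ c * z ^ γ := by gcongr
  exact exists_rpow_eq_of_sign_change (by positivity) hz hβγ.le hlow hhigh

theorem stmt0 (a b c : ℕ) (ha : 0 < a) (hb : 0 < b) (hc : 0 < c) (hca : c < a)
    (β γ : ℝ) (hβ : 2 < β) (hβγ : β < γ) :
    ∃ x₀ : ℕ, ∀ x : ℕ, x₀ ≤ x → ∀ z : ℤ,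
      ((b : ℝ) / (c * (x : ℝ) ^ 2 * Real.log x) + (a : ℝ) / c) ^ (1 / γ) * x < (z : ℝ) →
      (z : ℝ) < ((a : ℝ) / c) ^ (1 / β) * x →
      ∃ α : ℝ, β ≤ α ∧ α ≤ γ ∧
        (a : ℝ) * (x : ℝ) ^ α + (b : ℝ) = (c : ℝ) * (z : ℝ) ^ α :=
  stmt0_general a b c hc β γ hβ hβγ
end

section
/- Let a, b, c be positive integers with c > a, and let 2 < β < γ. For all sufficiently large integers x, if z is an integer with (a/(c − b/(x² log x)))^(1/β) · x < z < (a/c)^(1/γ) · x, then there exists a real number α with β ≤ α ≤ γ such that a·x^α + b = c·z^α. -/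
/-!
Put `L = x² log x`. For large `x` we have `b < L ≤ (a/c) x^β`, because `log x = o(x^(β-2))`.
The lower bound on `z` then gives `a x^β + b < c z^β` (using `b = (b/L) L ≤ (b/L) z^β`), and the
upper bound gives `c z^γ < a x^γ + b`; the intermediate value theorem in the exponent yields `α`.
-/

open Filter Real Set

theorem eventually_sq_mul_log_le_mul_rpow {k β : ℝ} (hk : 0 < k) (hβ : 2 < β) :
    ∀ᶠ y : ℝ in atTop, y ^ 2 * log y ≤ k * y ^ β := by
  filter_upwards [(isLittleO_log_rpow_atTop (sub_pos.2 hβ)).bound hk, eventually_ge_atTop 1]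
    with y hlog hy
  have hy0 : 0 < y := one_pos.trans_le hy
  rw [norm_of_nonneg (log_nonneg hy), norm_of_nonneg (rpow_nonneg hy0.le _)] at hlog
  calc y ^ 2 * log y ≤ y ^ 2 * (k * y ^ (β - 2)) := by gcongr
    _ = k * (y ^ (2 : ℝ) * y ^ (β - 2)) := by rw [rpow_two]; ring
    _ = k * y ^ β := by rw [← rpow_add hy0, add_sub_cancel]

section RpowBounds

variable {k X Z β : ℝ}

theorem mul_rpow_lt_rpow_of_rpow_inv_mul_lt (hk : 0 ≤ k) (hX : 0 ≤ X) (hβ : 0 < β)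
    (h : k ^ (1 / β) * X < Z) : k * X ^ β < Z ^ β := by
  have := rpow_lt_rpow (by positivity) h hβ
  rwa [mul_rpow (by positivity) hX, one_div, rpow_inv_rpow hk hβ.ne'] at this

theorem rpow_lt_mul_rpow_of_lt_rpow_inv_mul (hk : 0 ≤ k) (hX : 0 ≤ X) (hZ : 0 ≤ Z) (hβ : 0 < β)
    (h : Z < k ^ (1 / β) * X) : Z ^ β < k * X ^ β := by
  have := rpow_lt_rpow hZ h hβ
  rwa [mul_rpow (by positivity) hX, one_div, rpow_inv_rpow hk hβ.ne'] at this

end RpowBounds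

section ExponentialEquation

variable {a b c L X Z β γ : ℝ}

theorem add_lt_mul_rpow_of_rpow_inv_mul_lt (ha : 0 ≤ a) (hb : 0 ≤ b) (hL : 0 < L)
    (hbL : b / L < c) (hX : 0 ≤ X) (hβ : 0 < β) (hLX : L ≤ a / c * X ^ β)
    (hZ : (a / (c - b / L)) ^ (1 / β) * X < Z) : a * X ^ β + b < c * Z ^ β := by
  have hd : 0 ≤ b / L := div_nonneg hb hL.le
  have hcd : 0 < c - b / L := sub_pos.2 hbL
  have hZβ : a / (c - b / L) * X ^ β < Z ^ β :=
    mul_rpow_lt_rpow_of_rpow_inv_mul_lt (div_nonneg ha hcd.le) hX hβ hZ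
  have haX : a * X ^ β < (c - b / L) * Z ^ β := by
    rwa [div_mul_eq_mul_div, div_lt_iff₀' hcd] at hZβ
  have hLZ : L ≤ Z ^ β := by
    refine hLX.trans (le_of_lt (lt_of_le_of_lt ?_ hZβ))
    gcongr
    linarith
  have hbZ : b ≤ b / L * Z ^ β := by
    calc b = b / L * L := (div_mul_cancel₀ b hL.ne').symm
      _ ≤ b / L * Z ^ β := by gcongr
  linarith

theorem mul_rpow_lt_add_of_lt_rpow_inv_mul (ha : 0 ≤ a) (hb : 0 ≤ b) (hc : 0 < c) (hX : 0 ≤ X)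
    (hZ0 : 0 ≤ Z) (hγ : 0 < γ) (hZ : Z < (a / c) ^ (1 / γ) * X) : c * Z ^ γ < a * X ^ γ + b := by
  have := rpow_lt_mul_rpow_of_lt_rpow_inv_mul (div_nonneg ha hc.le) hX hZ0 hγ hZ
  rw [div_mul_eq_mul_div, lt_div_iff₀' hc] at this
  linarith

theorem exists_mem_Icc_mul_rpow_add_eq (hX : 0 < X) (hZ : 0 < Z) (hβγ : β ≤ γ)
    (hβ : a * X ^ β + b ≤ c * Z ^ β) (hγ : c * Z ^ γ ≤ a * X ^ γ + b) :
    ∃ α ∈ Icc β γ, a * X ^ α + b = c * Z ^ α := by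
  have hcont : Continuous fun u : ℝ => a * X ^ u + b - c * Z ^ u := by
    have := continuous_const_rpow hX.ne'
    have := continuous_const_rpow hZ.ne'
    fun_prop
  obtain ⟨α, hα, hα0⟩ := intermediate_value_Icc hβγ hcont.continuousOn
    (show (0 : ℝ) ∈ Icc _ _ from ⟨by linarith, by linarith⟩)
  exact ⟨α, hα, sub_eq_zero.1 hα0⟩

end ExponentialEquation

theorem eventually_lt_sq_mul_log_le_mul_rpow {b k β : ℝ} (hk : 0 < k) (hβ : 2 < β) :
    ∀ᶠ x : ℕ in atTop,
      0 < (x : ℝ) ∧ b < (x : ℝ) ^ 2 * log x ∧ (x : ℝ) ^ 2 * log x ≤ k * (x : ℝ) ^ β := by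
  have hcast := tendsto_natCast_atTop_atTop (R := ℝ)
  have hL : Tendsto (fun x : ℕ => (x : ℝ) ^ 2 * log x) atTop atTop :=
    ((tendsto_pow_atTop two_ne_zero).comp hcast).atTop_mul_atTop₀ (tendsto_log_atTop.comp hcast)
  exact (hcast.eventually_gt_atTop 0).and
    ((hL.eventually_gt_atTop b).and (hcast.eventually (eventually_sq_mul_log_le_mul_rpow hk hβ)))

theorem stmt1_general (a b c : ℕ) (ha : 0 < a) (hc : 0 < c)
    (β γ : ℝ) (hβ : 2 < β) (hβγ : β < γ) :
    ∃ x₀ : ℕ, ∀ x : ℕ, x₀ ≤ x → ∀ z : ℤ,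
      ((a : ℝ) / ((c : ℝ) - (b : ℝ) / ((x : ℝ) ^ 2 * Real.log x))) ^ (1 / β) * x < (z : ℝ) →
      (z : ℝ) < ((a : ℝ) / c) ^ (1 / γ) * x →
      ∃ α : ℝ, β ≤ α ∧ α ≤ γ ∧
        (a : ℝ) * (x : ℝ) ^ α + (b : ℝ) = (c : ℝ) * (z : ℝ) ^ α := by
  have hk : (0 : ℝ) < a / c := by positivity
  obtain ⟨x₀, hx₀⟩ := eventually_atTop.1 (eventually_lt_sq_mul_log_le_mul_rpow (b := b) hk hβ)
  refine ⟨x₀, fun x hx z hzβ hzγ => ?_⟩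
  obtain ⟨hx0, hbL, hLx⟩ := hx₀ x hx
  have hL : 0 < (x : ℝ) ^ 2 * log x := lt_of_le_of_lt b.cast_nonneg hbL
  have hbLc : (b : ℝ) / ((x : ℝ) ^ 2 * log x) < c :=
    ((div_lt_one hL).2 hbL).trans_le (by exact_mod_cast hc)
  have hz : (0 : ℝ) < z := lt_of_le_of_lt
    (mul_nonneg (rpow_nonneg (div_nonneg a.cast_nonneg (sub_pos.2 hbLc).le) _) hx0.le) hzβ
  obtain ⟨α, ⟨hβα, hαγ⟩, hα⟩ := exists_mem_Icc_mul_rpow_add_eq hx0 hz hβγ.le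
    (add_lt_mul_rpow_of_rpow_inv_mul_lt a.cast_nonneg b.cast_nonneg hL hbLc hx0.le
      (by linarith) hLx hzβ).le
    (mul_rpow_lt_add_of_lt_rpow_inv_mul a.cast_nonneg b.cast_nonneg (by exact_mod_cast hc)
      hx0.le hz.le (by linarith) hzγ).le
  exact ⟨α, hβα, hαγ, hα⟩

theorem stmt1 (a b c : ℕ) (ha : 0 < a) (hb : 0 < b) (hc : 0 < c) (hac : a < c)
    (β γ : ℝ) (hβ : 2 < β) (hβγ : β < γ) :
    ∃ x₀ : ℕ, ∀ x : ℕ, x₀ ≤ x → ∀ z : ℤ,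
      ((a : ℝ) / ((c : ℝ) - (b : ℝ) / ((x : ℝ) ^ 2 * Real.log x))) ^ (1 / β) * x < (z : ℝ) →
      (z : ℝ) < ((a : ℝ) / c) ^ (1 / γ) * x →
      ∃ α : ℝ, β ≤ α ∧ α ≤ γ ∧
        (a : ℝ) * (x : ℝ) ^ α + (b : ℝ) = (c : ℝ) * (z : ℝ) ^ α :=
  stmt1_general a b c ha hc β γ hβ hβγ
end

section
/- Let 2 < β < γ. For all sufficiently large integers x, if z is an integer with 2^(1/γ)·(x + 1/(x·⌈log x⌉)) < z < 2^(1/β)·x, then there exists a real number α with β ≤ α ≤ γ such that x^α + (x + 1/(x·⌈log x⌉))^α = z^α. -/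
/-!
Put `y = x + 1/(x⌈log x⌉) > x`. The function `α ↦ x^α + y^α - z^α` is continuous; at `α = β`
the bound `z < 2^(1/β) x` gives `z^β < 2 x^β ≤ x^β + y^β`, and at `α = γ` the bound
`2^(1/γ) y < z` gives `x^γ + y^γ ≤ 2 y^γ < z^γ`. The intermediate value theorem gives a root.
-/

open Real

lemma rpow_one_div_mul_rpow {a x t : ℝ} (ha : 0 ≤ a) (hx : 0 ≤ x) (ht : t ≠ 0) :
    (a ^ (1 / t) * x) ^ t = a * x ^ t := by
  rw [mul_rpow (rpow_nonneg ha _) hx, ← rpow_mul ha, one_div_mul_cancel ht, rpow_one]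

lemma exists_rpow_add_rpow_eq_rpow {x y z β γ : ℝ} (hx : 0 < x) (hxy : x ≤ y)
    (hβ : 0 < β) (hβγ : β ≤ γ) (hyz : 2 ^ (1 / γ) * y ≤ z) (hzx : z ≤ 2 ^ (1 / β) * x) :
    ∃ α ∈ Set.Icc β γ, x ^ α + y ^ α = z ^ α := by
  have hy : 0 < y := hx.trans_le hxy
  have hz : 0 < z := lt_of_lt_of_le (by positivity) hyz
  have hγ : 0 < γ := hβ.trans_le hβγ
  let f : ℝ → ℝ := fun α => x ^ α + y ^ α - z ^ α
  have hf : Continuous f := by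
    refine .sub (.add ?_ ?_) ?_ <;>
      exact continuous_const.rpow continuous_id fun _ => Or.inl (by positivity)
  have hfβ : 0 ≤ f β := by
    have hz_le : z ^ β ≤ 2 * x ^ β := by
      rw [← rpow_one_div_mul_rpow zero_le_two hx.le hβ.ne']
      exact rpow_le_rpow hz.le hzx hβ.le
    have := rpow_le_rpow hx.le hxy hβ.le
    simp only [f]; linarith
  have hfγ : f γ ≤ 0 := by
    have hz_ge : 2 * y ^ γ ≤ z ^ γ := by
      rw [← rpow_one_div_mul_rpow zero_le_two hy.le hγ.ne']
      exact rpow_le_rpow (by positivity) hyz hγ.le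
    have := rpow_le_rpow hx.le hxy hγ.le
    simp only [f]; linarith
  obtain ⟨α, hα, hfα⟩ := intermediate_value_Icc' hβγ hf.continuousOn ⟨hfγ, hfβ⟩
  exact ⟨α, hα, sub_eq_zero.mp hfα⟩

lemma lt_add_one_div_mul_ceil_log {x : ℝ} (hx : 1 < x) : x < x + 1 / (x * ⌈log x⌉) := by
  have : (0 : ℝ) < ⌈log x⌉ := by exact_mod_cast Int.ceil_pos.mpr (log_pos hx)
  have : 0 < 1 / (x * ⌈log x⌉) := by positivity
  linarith

theorem stmt2 (β γ : ℝ) (hβ : 2 < β) (hβγ : β < γ) :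
    ∃ x₀ : ℕ, ∀ x : ℕ, x₀ ≤ x → ∀ z : ℤ,
      (2 : ℝ) ^ (1 / γ) * ((x : ℝ) + 1 / ((x : ℝ) * (⌈Real.log x⌉ : ℝ))) < (z : ℝ) →
      (z : ℝ) < (2 : ℝ) ^ (1 / β) * x →
      ∃ α : ℝ, β ≤ α ∧ α ≤ γ ∧
        (x : ℝ) ^ α + ((x : ℝ) + 1 / ((x : ℝ) * (⌈Real.log x⌉ : ℝ))) ^ α = (z : ℝ) ^ α := by
  refine ⟨2, fun x hx z hyz hzx => ?_⟩
  have hx1 : (1 : ℝ) < x := by exact_mod_cast hx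
  obtain ⟨α, ⟨hβα, hαγ⟩, hα⟩ := exists_rpow_add_rpow_eq_rpow (by linarith)
    (lt_add_one_div_mul_ceil_log hx1).le (by linarith) hβγ.le hyz.le hzx.le
  exact ⟨α, hβα, hαγ, hα⟩
end

section
/- Let a, b, c be positive integers, α > 0 real, and n, X, Y, Z positive integers with a·X^α + b·Y^α = c·Z^α. Suppose {(nX)^α / c} < 1/(4ac) and {(nY)^α / c} < 1/(4bc). Then {(nX)^α} < 1/(4a), {(nY)^α} < 1/(4b), {(nZ)^α} < 1/(2c), and consequently a·⌊(nX)^α⌋ + b·⌊(nY)^α⌋ = c·⌊(nZ)^α⌋ with max({(nX)^α}, {(nY)^α}, {(nZ)^α}) < 1/2. -/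
/-! Since `c` is an integer, `{w} = c·{w/c}` whenever `c·{w/c} < 1`; this gives the bounds on
`{(nX)^α}` and `{(nY)^α}`. Writing `(nZ)^α = a·(nX)^α/c + b·(nY)^α/c`, subadditivity of `{·}`
gives `{(nZ)^α} < 1/(4c) + 1/(4c)`. Finally `a{(nX)^α} + b{(nY)^α} - c{(nZ)^α}` is an integer
of absolute value less than `1/2 + 1/2`, hence zero, which is the floor identity. -/

namespace Int

variable {K : Type*} [Field K] [LinearOrder K] [IsStrictOrderedRing K] [FloorRing K]

theorem fract_natCast_mul_le (m : ℕ) (u : K) : fract (m * u) ≤ m * fract u := by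
  induction m with
  | zero => simp
  | succ m ih =>
    calc fract ((m + 1 : ℕ) * u) = fract (m * u + u) := by push_cast; rw [add_mul, one_mul]
      _ ≤ fract (m * u) + fract u := fract_add_le _ _
      _ ≤ (m + 1 : ℕ) * fract u := by push_cast; linarith

theorem fract_natCast_mul_add_natCast_mul_le (a b : ℕ) (u v : K) :
    fract (a * u + b * v) ≤ a * fract u + b * fract v :=
  (fract_add_le _ _).trans (add_le_add (fract_natCast_mul_le a u) (fract_natCast_mul_le b v))

theorem natCast_mul_floor_add_natCast_mul_floor_eq {a b c : ℕ} {x y z : K}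
    (h : a * x + b * y = c * z) (hxy : a * fract x + b * fract y < 1) (hz : c * fract z < 1) :
    (a : ℤ) * ⌊x⌋ + b * ⌊y⌋ = c * ⌊z⌋ := by
  have hcarry : (((c * ⌊z⌋ - (a * ⌊x⌋ + b * ⌊y⌋) : ℤ)) : K)
      = a * fract x + b * fract y - c * fract z := by
    push_cast
    simp only [fract]
    linear_combination -h
  have hlt : |c * ⌊z⌋ - (a * ⌊x⌋ + b * ⌊y⌋)| < (1 : ℤ) := by
    have hx0 := mul_nonneg (Nat.cast_nonneg (α := K) a) (fract_nonneg x)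
    have hy0 := mul_nonneg (Nat.cast_nonneg (α := K) b) (fract_nonneg y)
    have hz0 := mul_nonneg (Nat.cast_nonneg (α := K) c) (fract_nonneg z)
    rw [← Int.cast_lt (R := K), Int.cast_abs, hcarry, Int.cast_one, abs_lt]
    constructor <;> linarith
  linarith [abs_lt_one_iff.mp hlt]

theorem fract_eq_mul_fract_div {c : ℕ} (hc : 0 < c) {w : K} (h : fract (w / c) < 1 / c) :
    fract w = c * fract (w / c) := by
  have hc' : (0 : K) < c := by exact_mod_cast hc
  refine fract_eq_iff.mpr ⟨by positivity, ?_, c * ⌊w / c⌋, ?_⟩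
  · rwa [lt_div_iff₀ hc', mul_comm] at h
  · rw [fract]; push_cast; field_simp; ring

theorem fract_lt_of_fract_div_lt {c : ℕ} (hc : 0 < c) {k w : K} (hk : 1 ≤ k)
    (h : fract (w / c) < 1 / (k * c)) : fract w < 1 / k := by
  have hc' : (0 : K) < c := by exact_mod_cast hc
  have hkc : 1 / (k * c) ≤ 1 / c := one_div_le_one_div_of_le hc' (by nlinarith)
  rw [fract_eq_mul_fract_div hc (h.trans_le hkc)]
  calc (c : K) * fract (w / c) < c * (1 / (k * c)) := mul_lt_mul_of_pos_left h hc'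
    _ = 1 / k := by field_simp

end Int

theorem stmt8_general (a b c : ℕ) (ha : 0 < a) (hb : 0 < b) (hc : 0 < c)
    (α : ℝ) (n X Y Z : ℕ)
    (heq : (a : ℝ) * (X : ℝ) ^ α + (b : ℝ) * (Y : ℝ) ^ α = (c : ℝ) * (Z : ℝ) ^ α)
    (h1 : Int.fract (((n : ℝ) * X) ^ α / c) < 1 / (4 * a * c))
    (h2 : Int.fract (((n : ℝ) * Y) ^ α / c) < 1 / (4 * b * c)) :
    Int.fract (((n : ℝ) * X) ^ α) < 1 / (4 * a) ∧
    Int.fract (((n : ℝ) * Y) ^ α) < 1 / (4 * b) ∧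
    Int.fract (((n : ℝ) * Z) ^ α) < 1 / (2 * c) ∧
    (a : ℤ) * ⌊((n : ℝ) * X) ^ α⌋ + (b : ℤ) * ⌊((n : ℝ) * Y) ^ α⌋
      = (c : ℤ) * ⌊((n : ℝ) * Z) ^ α⌋ ∧
    max (Int.fract (((n : ℝ) * X) ^ α))
      (max (Int.fract (((n : ℝ) * Y) ^ α)) (Int.fract (((n : ℝ) * Z) ^ α))) < 1 / 2 := by
  set x := ((n : ℝ) * X) ^ α
  set y := ((n : ℝ) * Y) ^ α
  set z := ((n : ℝ) * Z) ^ α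
  have ha' : (1 : ℝ) ≤ a := by exact_mod_cast ha
  have hb' : (1 : ℝ) ≤ b := by exact_mod_cast hb
  have hc' : (1 : ℝ) ≤ c := by exact_mod_cast hc
  have hrel : (a : ℝ) * x + b * y = c * z := by
    simp only [x, y, z, Real.mul_rpow n.cast_nonneg (Nat.cast_nonneg _)]
    linear_combination (n : ℝ) ^ α * heq
  have hx : Int.fract x < 1 / (4 * a) := Int.fract_lt_of_fract_div_lt hc (by linarith) h1
  have hy : Int.fract y < 1 / (4 * b) := Int.fract_lt_of_fract_div_lt hc (by linarith) h2
  have hz : Int.fract z < 1 / (2 * c) := by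
    have hz_eq : z = a * (x / c) + b * (y / c) := by
      field_simp
      linarith
    calc Int.fract z ≤ a * Int.fract (x / c) + b * Int.fract (y / c) := by
          rw [hz_eq]; exact Int.fract_natCast_mul_add_natCast_mul_le a b _ _
      _ < a * (1 / (4 * a * c)) + b * (1 / (4 * b * c)) := by gcongr
      _ = 1 / (2 * c) := by field_simp; ring
  have hax : (a : ℝ) * Int.fract x < 1 / 4 := by
    have := (lt_div_iff₀ (by positivity)).mp hx; linarith
  have hby : (b : ℝ) * Int.fract y < 1 / 4 := by
    have := (lt_div_iff₀ (by positivity)).mp hy; linarith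
  have hcz : (c : ℝ) * Int.fract z < 1 / 2 := by
    have := (lt_div_iff₀ (by positivity)).mp hz; linarith
  have hfloor := Int.natCast_mul_floor_add_natCast_mul_floor_eq hrel (by linarith) (by linarith)
  refine ⟨hx, hy, hz, hfloor, max_lt ?_ (max_lt ?_ ?_)⟩
  · exact hx.trans_le (one_div_le_one_div_of_le two_pos (by linarith))
  · exact hy.trans_le (one_div_le_one_div_of_le two_pos (by linarith))
  · exact hz.trans_le (one_div_le_one_div_of_le two_pos (by linarith))

theorem stmt8 (a b c : ℕ) (ha : 0 < a) (hb : 0 < b) (hc : 0 < c)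
    (α : ℝ) (hα : 0 < α) (n X Y Z : ℕ) (hn : 0 < n) (hX : 0 < X) (hY : 0 < Y) (hZ : 0 < Z)
    (heq : (a : ℝ) * (X : ℝ) ^ α + (b : ℝ) * (Y : ℝ) ^ α = (c : ℝ) * (Z : ℝ) ^ α)
    (h1 : Int.fract (((n : ℝ) * X) ^ α / c) < 1 / (4 * a * c))
    (h2 : Int.fract (((n : ℝ) * Y) ^ α / c) < 1 / (4 * b * c)) :
    Int.fract (((n : ℝ) * X) ^ α) < 1 / (4 * a) ∧
    Int.fract (((n : ℝ) * Y) ^ α) < 1 / (4 * b) ∧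
    Int.fract (((n : ℝ) * Z) ^ α) < 1 / (2 * c) ∧
    (a : ℤ) * ⌊((n : ℝ) * X) ^ α⌋ + (b : ℤ) * ⌊((n : ℝ) * Y) ^ α⌋
      = (c : ℤ) * ⌊((n : ℝ) * Z) ^ α⌋ ∧
    max (Int.fract (((n : ℝ) * X) ^ α))
      (max (Int.fract (((n : ℝ) * Y) ^ α)) (Int.fract (((n : ℝ) * Z) ^ α))) < 1 / 2 :=
  stmt8_general a b c ha hb hc α n X Y Z heq h1 h2
end

section
/- There is no real number α_S > 1 such that for all α > 1 the equation x + y = z is solvable in PS(α) if α < α_S and not solvable if α > α_S. Equivalently, the set { α > 2 : x + y = z is solvable in PS(α) } is unbounded (indeed dense in (2, ∞)). -/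
/-- The Piatetski-Shapiro set `PS(α) = { ⌊n^α⌋ : n ∈ ℕ, n ≥ 1 }`. -/
def PS (α : ℝ) : Set ℤ := {m | ∃ n : ℕ, 0 < n ∧ m = ⌊(n : ℝ) ^ α⌋}

/-- The equation `x + y = z` is solvable in `PS(α)`: there are infinitely many
pairwise distinct triples `(x, y, z) ∈ PS(α)³` with `x + y = z`. -/
def SolvableXYZ (α : ℝ) : Prop :=
  {p : ℤ × ℤ × ℤ | p.1 ∈ PS α ∧ p.2.1 ∈ PS α ∧ p.2.2 ∈ PS α ∧
    p.1 ≠ p.2.1 ∧ p.1 ≠ p.2.2 ∧ p.2.1 ≠ p.2.2 ∧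
    p.1 + p.2.1 = p.2.2}.Infinite

/-! For `1 ≤ a < b` take `n ≈ m ^ θ` with `1 - 1/a < θ < 1 - 1/b`. Then `(m+1)^a - m^a` is much
smaller than `n^a` while `(m+1)^b - m^b` is much larger than `n^b`, so the integer
`H β = ⌊(m+1)^β⌋ - ⌊m^β⌋ - ⌊n^β⌋` is negative at `a` and positive at `b`. It is right-continuous
and jumps up by at most one at a time (only its first term can raise it), so it vanishes at some
`c ∈ (a, b)`; as the three floors stay constant just to the right of `c`, the solution
`⌊n^β⌋ + ⌊m^β⌋ = ⌊(m+1)^β⌋` persists on an open interval. Thus for every bound `B` the exponents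
having a solution above `B` contain a dense open subset of `(1, ∞)`, and by Baire's theorem a
dense set of exponents has solutions above every bound. -/

open Real Filter Set Topology

lemma rpow_add_mul_rpow_sub_one_mul_sub_le_rpow {u v p : ℝ} (hu : 0 ≤ u) (hv : 0 < v)
    (hp : 1 ≤ p) : v ^ p + p * v ^ (p - 1) * (u - v) ≤ u ^ p := by
  have hs : -1 ≤ (u - v) / v := by rw [le_div_iff₀ hv]; linarith
  have hbern := one_add_mul_self_le_rpow_one_add hs hp
  rw [show 1 + (u - v) / v = u / v by field_simp; ring, div_rpow hu hv.le,
    le_div_iff₀ (rpow_pos_of_pos hv p)] at hbern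
  calc v ^ p + p * v ^ (p - 1) * (u - v) = (1 + p * ((u - v) / v)) * v ^ p := by
        rw [rpow_sub_one hv.ne']; field_simp
    _ ≤ u ^ p := hbern

lemma rpow_sub_one_le_add_one_rpow_sub_rpow {x p : ℝ} (hx : 1 ≤ x) (hp : 1 ≤ p) :
    x ^ (p - 1) ≤ (x + 1) ^ p - x ^ p := by
  have h := rpow_add_mul_rpow_sub_one_mul_sub_le_rpow (u := x + 1) (by linarith)
    (by linarith : 0 < x) hp
  have : x ^ (p - 1) ≤ p * x ^ (p - 1) :=
    le_mul_of_one_le_left (rpow_nonneg (by linarith) _) hp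
  linarith

lemma add_one_rpow_sub_rpow_le {x p : ℝ} (hx : 1 ≤ x) (hp : 1 ≤ p) :
    (x + 1) ^ p - x ^ p ≤ p * 2 ^ (p - 1) * x ^ (p - 1) := by
  have h := rpow_add_mul_rpow_sub_one_mul_sub_le_rpow (u := x) (v := x + 1) (by linarith)
    (by linarith) hp
  have h2 : (x + 1) ^ (p - 1) ≤ (2 * x) ^ (p - 1) :=
    rpow_le_rpow (by linarith) (by linarith) (by linarith)
  rw [mul_rpow zero_le_two (by linarith)] at h2
  have hp0 : 0 ≤ p := by linarith
  nlinarith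

lemma eventually_mul_rpow_add_le_rpow {p q : ℝ} (hq : 0 ≤ q) (hqp : q < p) (A C : ℝ) :
    ∀ᶠ x : ℝ in atTop, A * x ^ q + C ≤ x ^ p := by
  filter_upwards [eventually_ge_atTop 1,
    (tendsto_rpow_atTop (sub_pos.2 hqp)).eventually_ge_atTop (|A| + |C|)] with x hx1 hx
  have hxq : 1 ≤ x ^ q := one_le_rpow hx1 hq
  calc A * x ^ q + C ≤ (|A| + |C|) * x ^ q := by
        nlinarith [le_abs_self A, le_abs_self C, abs_nonneg C]
    _ ≤ x ^ (p - q) * x ^ q := by gcongr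
    _ = x ^ p := by rw [← rpow_add (by linarith), sub_add_cancel]

lemma exists_nat_rpow_gaps (K : ℕ) {a b : ℝ} (ha : 1 ≤ a) (hab : a < b) :
    ∃ m n : ℕ, K < n ∧ n < m ∧
      ((m : ℝ) + 1) ^ a - (m : ℝ) ^ a + 2 ≤ (n : ℝ) ^ a ∧
      (n : ℝ) ^ b + 1 ≤ ((m : ℝ) + 1) ^ b - (m : ℝ) ^ b := by
  set θ := 1 - 2 / (a + b) with hθ
  have hab2 : 2 < a + b := by linarith
  have hθ0 : 0 < θ := by rw [hθ, sub_pos, div_lt_one (by linarith)]; exact hab2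
  have hθ1 : θ < 1 := by rw [hθ]; linarith [div_pos two_pos (by linarith : (0 : ℝ) < a + b)]
  have hθa : a - 1 < θ * a := by
    have : 2 / (a + b) * a < 1 := by rw [div_mul_eq_mul_div, div_lt_one (by linarith)]; linarith
    rw [hθ]; linarith
  have hθb : θ * b < b - 1 := by
    have : 1 < 2 / (a + b) * b := by rw [div_mul_eq_mul_div, one_lt_div (by linarith)]; linarith
    rw [hθ]; linarith
  obtain ⟨m, hm1, hK, hθm, hA, hB⟩ := (tendsto_natCast_atTop_atTop.eventually
    ((eventually_ge_atTop 1).and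
    (((tendsto_rpow_atTop hθ0).eventually_ge_atTop ((K : ℝ) + 1)).and
    ((eventually_mul_rpow_add_le_rpow hθ0.le hθ1 1 2).and
    ((eventually_mul_rpow_add_le_rpow (by linarith) hθa (a * 2 ^ (a - 1)) 2).and
    (eventually_mul_rpow_add_le_rpow (by nlinarith) hθb (2 ^ b) 1)))))).exists
  rw [one_mul, rpow_one] at hθm
  set n := ⌈(m : ℝ) ^ θ⌉₊
  have hn_ge : (m : ℝ) ^ θ ≤ n := Nat.le_ceil _
  have hn_lt : (n : ℝ) < (m : ℝ) ^ θ + 1 := Nat.ceil_lt_add_one (by positivity)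
  have hmθ : 1 ≤ (m : ℝ) ^ θ := one_le_rpow hm1 hθ0.le
  refine ⟨m, n, ?_, ?_, ?_, ?_⟩
  · exact_mod_cast (by linarith : (K : ℝ) < n)
  · exact_mod_cast (by linarith : (n : ℝ) < m)
  · calc ((m : ℝ) + 1) ^ a - (m : ℝ) ^ a + 2 ≤ a * 2 ^ (a - 1) * (m : ℝ) ^ (a - 1) + 2 := by
          linarith [add_one_rpow_sub_rpow_le hm1 ha]
      _ ≤ ((m : ℝ) ^ θ) ^ a := by rw [← rpow_mul (by linarith)]; exact hA
      _ ≤ (n : ℝ) ^ a := by gcongr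
  · calc (n : ℝ) ^ b + 1 ≤ (2 * (m : ℝ) ^ θ) ^ b + 1 := by
          gcongr <;> linarith
      _ = 2 ^ b * (m : ℝ) ^ (θ * b) + 1 := by
          rw [mul_rpow zero_le_two (by positivity), ← rpow_mul (by linarith)]
      _ ≤ (m : ℝ) ^ (b - 1) := hB
      _ ≤ ((m : ℝ) + 1) ^ b - (m : ℝ) ^ b :=
          rpow_sub_one_le_add_one_rpow_sub_rpow hm1 (by linarith)

lemma eventually_floor_rpow_eq {t : ℝ} (ht : 1 ≤ t) (c : ℝ) :
    ∀ᶠ β in 𝓝[≥] c, ⌊t ^ β⌋ = ⌊t ^ c⌋ := by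
  have hlt : ∀ᶠ β in 𝓝 c, t ^ β < ⌊t ^ c⌋ + 1 :=
    (continuousAt_const_rpow (by linarith)).eventually_lt continuousAt_const
      (Int.lt_floor_add_one _)
  filter_upwards [self_mem_nhdsWithin, nhdsWithin_le_nhds hlt] with β (hβ : c ≤ β) hβ'
  rw [Int.floor_eq_iff]
  exact ⟨(Int.floor_le _).trans (rpow_le_rpow_of_exponent_le ht hβ), hβ'⟩

lemma eventually_floor_rpow_le_floor_rpow_add_one {t : ℝ} (ht : 0 < t) (c : ℝ) :
    ∀ᶠ β in 𝓝 c, ⌊t ^ c⌋ ≤ ⌊t ^ β⌋ + 1 := by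
  have hlt : ∀ᶠ β in 𝓝 c, (⌊t ^ c⌋ : ℝ) - 1 < t ^ β :=
    continuousAt_const.eventually_lt (continuousAt_const_rpow ht.ne')
      (by linarith [Int.floor_le (t ^ c)])
  filter_upwards [hlt] with β hβ
  have := Int.lt_floor_add_one (t ^ β)
  have : (⌊t ^ c⌋ : ℝ) < ⌊t ^ β⌋ + 2 := by linarith
  have : ⌊t ^ c⌋ < ⌊t ^ β⌋ + 2 := by exact_mod_cast this
  omega

theorem exists_mem_Ioo_eq_zero_of_jump_le_one {H : ℝ → ℤ} {a b : ℝ} (hab : a < b)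
    (ha : H a < 0) (hb : 0 < H b) (hright : ∀ c, ∀ᶠ β in 𝓝[≥] c, H β ≤ H c)
    (hleft : ∀ c, ∀ᶠ β in 𝓝[<] c, H c ≤ H β + 1) : ∃ c ∈ Ioo a b, H c = 0 := by
  set S := {β ∈ Icc a b | 0 ≤ H β}
  have hbS : b ∈ S := ⟨⟨hab.le, le_rfl⟩, hb.le⟩
  have hglb : IsGLB S (sInf S) := isGLB_csInf ⟨b, hbS⟩ ⟨a, fun β hβ => hβ.1.1⟩
  set c := sInf S
  have hc_nonneg : 0 ≤ H c := by
    obtain ⟨β, hβS, hβ⟩ := ((hglb.frequently_mem ⟨b, hbS⟩).and_eventually (hright c)).exists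
    exact hβS.2.trans hβ
  have hac : a < c := lt_of_le_of_ne (hglb.2 fun β hβ => hβ.1.1) fun h => by rw [h] at ha; omega
  have hcb : c ≤ b := hglb.1 hbS
  have hc_nonpos : H c ≤ 0 := by
    obtain ⟨β, hβ, hβac⟩ := ((hleft c).and (Ioo_mem_nhdsLT hac)).exists
    have hβS : β ∉ S := fun h => (hglb.1 h).not_gt hβac.2
    have : H β < 0 := not_le.1 fun h => hβS ⟨⟨hβac.1.le, hβac.2.le.trans hcb⟩, h⟩
    omega
  have hcb' : c < b := lt_of_le_of_ne hcb fun h => by rw [h] at hc_nonpos; omega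
  exact ⟨c, ⟨hac, hcb'⟩, le_antisymm hc_nonpos hc_nonneg⟩

def solutionsXYZ (α : ℝ) : Set (ℤ × ℤ × ℤ) :=
  {p | p.1 ∈ PS α ∧ p.2.1 ∈ PS α ∧ p.2.2 ∈ PS α ∧
    p.1 ≠ p.2.1 ∧ p.1 ≠ p.2.2 ∧ p.2.1 ≠ p.2.2 ∧ p.1 + p.2.1 = p.2.2}

lemma floor_rpow_lt_floor_rpow {α : ℝ} (hα : 1 ≤ α) {j k : ℕ} (hj : 0 < j) (hjk : j < k) :
    ⌊(j : ℝ) ^ α⌋ < ⌊(k : ℝ) ^ α⌋ := by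
  have hj1 : (1 : ℝ) ≤ j := by exact_mod_cast hj
  have hstep : (j : ℝ) ^ α + 1 ≤ ((j : ℝ) + 1) ^ α := by
    linarith [rpow_sub_one_le_add_one_rpow_sub_rpow hj1 hα,
      one_le_rpow hj1 (by linarith : 0 ≤ α - 1)]
  have hjk' : ((j : ℝ) + 1) ^ α ≤ (k : ℝ) ^ α :=
    rpow_le_rpow (by positivity) (by exact_mod_cast hjk) (by linarith)
  have := Int.floor_le_floor (hstep.trans hjk')
  rw [Int.floor_add_one] at this
  omega

lemma floor_rpow_triple_mem_solutionsXYZ {α : ℝ} (hα : 1 ≤ α) {n m : ℕ} (hn : 0 < n)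
    (hnm : n < m) (hsum : ⌊(n : ℝ) ^ α⌋ + ⌊(m : ℝ) ^ α⌋ = ⌊((m : ℝ) + 1) ^ α⌋) :
    (⌊(n : ℝ) ^ α⌋, ⌊(m : ℝ) ^ α⌋, ⌊((m : ℝ) + 1) ^ α⌋) ∈ solutionsXYZ α := by
  have hxy := floor_rpow_lt_floor_rpow hα hn hnm
  have hyz := floor_rpow_lt_floor_rpow hα (hn.trans hnm) m.lt_succ_self
  rw [Nat.cast_succ] at hyz
  refine ⟨⟨n, hn, rfl⟩, ⟨m, hn.trans hnm, rfl⟩, ⟨m + 1, m.succ_pos, by push_cast; rfl⟩,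
    hxy.ne, (hxy.trans hyz).ne, hyz.ne, hsum⟩

lemma exists_large_solution_on_Ioo (B : ℤ) {a b : ℝ} (ha : 1 ≤ a) (hab : a < b) :
    ∃ p : ℤ × ℤ × ℤ, B < p.1 ∧
      ∃ u v, u < v ∧ Ioo u v ⊆ Ioo a b ∧ ∀ α ∈ Ioo u v, p ∈ solutionsXYZ α := by
  obtain ⟨m, n, hBn, hnm, hgap_a, hgap_b⟩ := exists_nat_rpow_gaps B.toNat ha hab
  have hn : 0 < n := Nat.zero_lt_of_lt hBn
  have hn1 : (1 : ℝ) ≤ n := by exact_mod_cast hn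
  have hm1 : (1 : ℝ) ≤ m := by exact_mod_cast hn.trans hnm
  have hm1' : (1 : ℝ) ≤ m + 1 := by linarith
  set H : ℝ → ℤ := fun β => ⌊((m : ℝ) + 1) ^ β⌋ - ⌊(m : ℝ) ^ β⌋ - ⌊(n : ℝ) ^ β⌋
  have hHa : H a < 0 := by
    have : (H a : ℝ) < 0 := by
      simp only [H]; push_cast
      linarith [Int.floor_le (((m : ℝ) + 1) ^ a), Int.sub_one_lt_floor ((m : ℝ) ^ a),
        Int.sub_one_lt_floor ((n : ℝ) ^ a)]
    exact_mod_cast this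
  have hHb : 0 < H b := by
    have : 0 < (H b : ℝ) := by
      simp only [H]; push_cast
      linarith [Int.sub_one_lt_floor (((m : ℝ) + 1) ^ b), Int.floor_le ((m : ℝ) ^ b),
        Int.floor_le ((n : ℝ) ^ b)]
    exact_mod_cast this
  have hright : ∀ c, ∀ᶠ β in 𝓝[≥] c, H β ≤ H c := fun c => by
    filter_upwards [eventually_floor_rpow_eq hm1' c, eventually_floor_rpow_eq hm1 c,
      eventually_floor_rpow_eq hn1 c] with β h1 h2 h3
    simp only [H, h1, h2, h3, le_refl]
  have hleft : ∀ c, ∀ᶠ β in 𝓝[<] c, H c ≤ H β + 1 := fun c => by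
    filter_upwards [self_mem_nhdsWithin, nhdsWithin_le_nhds
      (eventually_floor_rpow_le_floor_rpow_add_one (by linarith : (0 : ℝ) < m + 1) c)]
      with β (hβ : β < c) h1
    have h2 := Int.floor_le_floor (rpow_le_rpow_of_exponent_le hm1 hβ.le)
    have h3 := Int.floor_le_floor (rpow_le_rpow_of_exponent_le hn1 hβ.le)
    simp only [H]
    omega
  obtain ⟨c, ⟨hac, hcb⟩, hHc⟩ :=
    exists_mem_Ioo_eq_zero_of_jump_le_one hab hHa hHb hright hleft
  have hpinned : ∀ᶠ β in 𝓝[>] c, β ∈ Ioo c b ∧ ⌊((m : ℝ) + 1) ^ β⌋ = ⌊((m : ℝ) + 1) ^ c⌋ ∧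
      ⌊(m : ℝ) ^ β⌋ = ⌊(m : ℝ) ^ c⌋ ∧ ⌊(n : ℝ) ^ β⌋ = ⌊(n : ℝ) ^ c⌋ :=
    Filter.Eventually.and (Ioo_mem_nhdsGT hcb) <| nhdsWithin_mono _ Ioi_subset_Ici_self <|
      (eventually_floor_rpow_eq hm1' c).and <|
      (eventually_floor_rpow_eq hm1 c).and (eventually_floor_rpow_eq hn1 c)
  obtain ⟨v, hcv, hv⟩ := mem_nhdsGT_iff_exists_Ioo_subset.1 hpinned
  refine ⟨(⌊(n : ℝ) ^ c⌋, ⌊(m : ℝ) ^ c⌋, ⌊((m : ℝ) + 1) ^ c⌋), ?_, c, v, hcv,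
    fun β hβ => ⟨hac.trans (hv hβ).1.1, (hv hβ).1.2⟩, fun α hα => ?_⟩
  · have : (n : ℤ) ≤ ⌊(n : ℝ) ^ c⌋ :=
      Int.le_floor.2 (by push_cast; exact self_le_rpow_of_one_le hn1 (by linarith))
    have := Int.self_le_toNat B
    dsimp only
    omega
  · obtain ⟨-, h1, h2, h3⟩ := hv hα
    have hsum : ⌊(n : ℝ) ^ α⌋ + ⌊(m : ℝ) ^ α⌋ = ⌊((m : ℝ) + 1) ^ α⌋ := by
      simp only [H] at hHc
      omega
    have := floor_rpow_triple_mem_solutionsXYZ (by linarith [hα.1]) hn hnm hsum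
    rwa [h1, h2, h3] at this

-- Exponents `α ≤ 1` are let in so that the set is dense in `ℝ`, where Baire's theorem applies.
lemma dense_interior_setOf_exists_large_solution (B : ℤ) :
    Dense (interior {α : ℝ | 1 < α → ∃ p ∈ solutionsXYZ α, B < p.1}) := by
  refine dense_of_exists_between fun u v huv => ?_
  rcases lt_or_ge u 1 with hu | hu
  · obtain ⟨w, huw, hwv⟩ := exists_between (lt_min huv hu)
    exact ⟨w, interior_maximal (fun α (hα : α < 1) h1 => absurd h1 hα.not_gt) isOpen_Iio
      (lt_min_iff.1 hwv).2, huw, (lt_min_iff.1 hwv).1⟩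
  · obtain ⟨p, hBp, s, t, hst, hsub, hsol⟩ := exists_large_solution_on_Ioo B hu huv
    obtain ⟨w, hsw, hwt⟩ := exists_between hst
    exact ⟨w, interior_maximal (fun α hα _ => ⟨p, hsol α hα, hBp⟩) isOpen_Ioo ⟨hsw, hwt⟩,
      hsub ⟨hsw, hwt⟩⟩

theorem exists_solvableXYZ_mem_Ioo {a b : ℝ} (ha : 1 ≤ a) (hab : a < b) :
    ∃ α ∈ Ioo a b, SolvableXYZ α := by
  have hdense := dense_iInter_of_isOpen (fun _ => isOpen_interior)
    dense_interior_setOf_exists_large_solution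
  obtain ⟨α, hαab, hα⟩ := hdense.inter_open_nonempty _ isOpen_Ioo (nonempty_Ioo.2 hab)
  refine ⟨α, hαab, Infinite.of_image Prod.fst (infinite_of_forall_exists_gt fun B => ?_)⟩
  have hαB : 1 < α → ∃ p ∈ solutionsXYZ α, B < p.1 := interior_subset (mem_iInter.1 hα B)
  obtain ⟨p, hp, hBp⟩ := hαB (ha.trans_lt hαab.1)
  exact ⟨p.1, mem_image_of_mem _ hp, hBp⟩

theorem stmt15 :
    (¬ ∃ αS : ℝ, 1 < αS ∧ ∀ α : ℝ, 1 < α →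
        ((α < αS → SolvableXYZ α) ∧ (αS < α → ¬ SolvableXYZ α))) ∧
    ∀ α : ℝ, 2 < α → α ∈ closure {β : ℝ | 2 < β ∧ SolvableXYZ β} := by
  refine ⟨fun ⟨αS, hαS, h⟩ => ?_, fun α hα => Metric.mem_closure_iff.2 fun ε hε => ?_⟩
  · obtain ⟨β, hβ, hsol⟩ := exists_solvableXYZ_mem_Ioo hαS.le (lt_add_one αS)
    exact (h β (hαS.trans hβ.1)).2 hβ.1 hsol
  · obtain ⟨β, hβ, hsol⟩ :=
      exists_solvableXYZ_mem_Ioo (by simp : (1 : ℝ) ≤ max 2 (α - ε)) (max_lt hα (by linarith))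
    refine ⟨β, ⟨(le_max_left _ _).trans_lt hβ.1, hsol⟩, ?_⟩
    rw [Real.dist_eq, abs_lt]
    constructor <;> linarith [le_max_right 2 (α - ε), hβ.1, hβ.2]
end
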